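/- If V > 0 and −π < ψ < −π/3, then the layer potential V₊ attains its global maximum over ℝ² at the moiré-cell corner r₊ = (a₁+a₂)/3: for every r ∈ ℝ², V₊(r) ≤ 6V cos(ψ + 2π/3), with equality at r = (a₁+a₂)/3. Equivalently, for all u, v ∈ ℝ, cos(u+ψ) + cos(v+ψ) + cos(u+v−ψ) ≤ 3 cos(ψ + 2π/3), with equality at u = v = 2π/3; hence the minimum of −V₊ lies at the 2b Wyckoff position (a₁+a₂)/3. -/

import Mathlib

open Real

noncomputable section

/-- Dot product on ℝ². -/
def dot2 (p q : ℝ × ℝ) : ℝ := p.1 * q.1 + p.2 * q.2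

/-- The first-shell moiré reciprocal vectors b₁ = k_θ(1,0), b₂ = R b₁, b₃ = R b₂. -/
def bv (kθ : ℝ) : Fin 3 → ℝ × ℝ
  | 0 => (kθ, 0)
  | 1 => (-(kθ / 2), kθ * Real.sqrt 3 / 2)
  | 2 => (-(kθ / 2), -(kθ * Real.sqrt 3 / 2))

/-- Top-layer moiré potential V₊(r) = 2V ∑ₙ cos(bₙ·r + ψ). -/
def Vtop (kθ V ψ : ℝ) (r : ℝ × ℝ) : ℝ :=
  2 * V * ∑ n : Fin 3, Real.cos (dot2 (bv kθ n) r + ψ)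

/-- The moiré lattice vector a₁ = (2π/k_θ)(1, 1/√3). -/
def av₁ (kθ : ℝ) : ℝ × ℝ := (2 * Real.pi / kθ, 2 * Real.pi / (kθ * Real.sqrt 3))

/-- The moiré lattice vector a₂ = (2π/k_θ)(0, 2/√3). -/
def av₂ (kθ : ℝ) : ℝ × ℝ := (0, 4 * Real.pi / (kθ * Real.sqrt 3))

end

lemma key_ineq (θ s : ℝ) (hp : 1/2 < Real.cos θ) :
    2 * |Real.cos (s + θ)| + Real.cos (2*s - θ) ≤ 3 * Real.cos θ := by
  have hpq := Real.sin_sq_add_cos_sq θ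
  have hSC := Real.sin_sq_add_cos_sq s
  have h1 : Real.cos (s + θ) = Real.cos s * Real.cos θ - Real.sin s * Real.sin θ :=
    Real.cos_add s θ
  have h2 : Real.cos (2*s - θ) = (1 - 2*(Real.sin s)^2) * Real.cos θ
      + (2*(Real.sin s)*(Real.cos s)) * Real.sin θ := by
    rw [Real.cos_sub, Real.cos_two_mul', Real.sin_two_mul]
    linear_combination Real.cos θ * hSC
  rw [h1, h2]
  set p := Real.cos θ with hpdef
  set q := Real.sin θ with hqdef
  set S := Real.sin s with hSdef
  set C := Real.cos s with hCdef
  have hq2 : q^2 < 3/4 := by nlinarith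
  have hL : 0 < p*(1+S^2) - q*S*C := by
    nlinarith [sq_nonneg (q*(S^2 - C^2)), sq_nonneg (S*C), mul_nonneg (by linarith : (0:ℝ) ≤ p) (sq_nonneg S), sq_nonneg (q*S*C)]
  have hcos2 : (1-2*S^2)*(p^2-q^2) + (2*S*C)*(2*p*q) ≤ 1 := by
    have hA : (1-2*S^2)^2 + (2*S*C)^2 = 1 := by linear_combination (4*S^2) * hSC
    have hB : (p^2-q^2)^2 + (2*p*q)^2 = 1 := by linear_combination (p^2+q^2+1) * hpq
    nlinarith [sq_nonneg ((1-2*S^2) - (p^2-q^2)), sq_nonneg (2*S*C - 2*p*q)]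
  have hbrpos : 0 < 3*p^2 + (p^2-q^2)*S^2 - 2*p*q*S*C := by nlinarith [hcos2]
  have hid : (p*(1+S^2) - q*S*C)^2 - (C*p - S*q)^2
      = S^2 * (3*p^2 + (p^2-q^2)*S^2 - 2*p*q*S*C) := by
    linear_combination (q^2*S^2 - p^2) * hSC
  have hsq : (C*p - S*q)^2 ≤ (p*(1+S^2) - q*S*C)^2 := by
    nlinarith [hid, mul_nonneg (sq_nonneg S) hbrpos.le]
  have habs : |C*p - S*q| ≤ p*(1+S^2) - q*S*C := by
    nlinarith [sq_abs (C*p - S*q), abs_nonneg (C*p - S*q), hsq, hL]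
  linarith

lemma sum3_le (ψ : ℝ) (hp : 1/2 < Real.cos (ψ + 2*Real.pi/3)) (u v : ℝ) :
    Real.cos (u + ψ) + Real.cos (v + ψ) + Real.cos (u + v - ψ)
      ≤ 3 * Real.cos (ψ + 2*Real.pi/3) := by
  set θ := ψ + 2*Real.pi/3 with hθ
  set s := (u+v)/2 + ψ - θ with hs
  have hsum : Real.cos (u + ψ) + Real.cos (v + ψ)
      = 2 * Real.cos (s + θ) * Real.cos ((u-v)/2) := by
    rw [Real.cos_add_cos]
    congr 2
    · rw [hs]; ring
    · ring
  have h2 : Real.cos (u + v - ψ) = Real.cos (2*s - θ) := by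
    have : u + v - ψ = (2*s - θ) + 2*Real.pi := by rw [hs, hθ]; ring
    rw [this, Real.cos_add_two_pi]
  have hcd : 2 * Real.cos (s + θ) * Real.cos ((u-v)/2) ≤ 2 * |Real.cos (s + θ)| := by
    have h1 : Real.cos (s + θ) * Real.cos ((u-v)/2) ≤ |Real.cos (s + θ)| := by
      calc Real.cos (s + θ) * Real.cos ((u-v)/2)
          ≤ |Real.cos (s + θ) * Real.cos ((u-v)/2)| := le_abs_self _
        _ = |Real.cos (s + θ)| * |Real.cos ((u-v)/2)| := abs_mul _ _
        _ ≤ |Real.cos (s + θ)| * 1 := by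
            exact mul_le_mul_of_nonneg_left (Real.abs_cos_le_one _) (abs_nonneg _)
        _ = |Real.cos (s + θ)| := mul_one _
    linarith
  have := key_ineq θ s hp
  linarith [hsum, h2, hcd, this]

/-- For V > 0 and −π < ψ < −π/3, the layer potential V₊ attains its global maximum at
r₊ = (a₁+a₂)/3: V₊(r) ≤ 6V cos(ψ+2π/3) with equality at (a₁+a₂)/3. Equivalently,
cos(u+ψ)+cos(v+ψ)+cos(u+v−ψ) ≤ 3cos(ψ+2π/3) with equality at u = v = 2π/3. -/
theorem Vtop_max_at_corner (kθ V ψ : ℝ) (hkθ : 0 < kθ) (hV : 0 < V)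
    (hψ₁ : -Real.pi < ψ) (hψ₂ : ψ < -(Real.pi / 3)) :
    (∀ r : ℝ × ℝ, Vtop kθ V ψ r ≤ 6 * V * Real.cos (ψ + 2 * Real.pi / 3)) ∧
    Vtop kθ V ψ ((1/3 : ℝ) • (av₁ kθ + av₂ kθ)) = 6 * V * Real.cos (ψ + 2 * Real.pi / 3) ∧
    (∀ u v : ℝ,
      Real.cos (u + ψ) + Real.cos (v + ψ) + Real.cos (u + v - ψ)
        ≤ 3 * Real.cos (ψ + 2 * Real.pi / 3)) ∧
    Real.cos (2 * Real.pi / 3 + ψ) + Real.cos (2 * Real.pi / 3 + ψ)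
        + Real.cos (2 * Real.pi / 3 + 2 * Real.pi / 3 - ψ)
      = 3 * Real.cos (ψ + 2 * Real.pi / 3) := by
  have hpi := Real.pi_pos
  -- cos(ψ+2π/3) > 1/2
  have habs : |ψ + 2*Real.pi/3| < Real.pi/3 := by
    rw [abs_lt]; constructor <;> linarith
  have hp : 1/2 < Real.cos (ψ + 2*Real.pi/3) := by
    have h1 : Real.cos (Real.pi/3) < Real.cos |ψ + 2*Real.pi/3| :=
      Real.cos_lt_cos_of_nonneg_of_le_pi (abs_nonneg _) (by linarith) habs
    rwa [Real.cos_pi_div_three, Real.cos_abs] at h1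
  have hmain := sum3_le ψ hp
  have hmain' : ∀ u v : ℝ,
      Real.cos (u + ψ) + Real.cos (v + ψ) + Real.cos (u + v - ψ)
        ≤ 3 * Real.cos (ψ + 2 * Real.pi / 3) := by
    intro u v
    have := hmain u v
    linarith [this]
  refine ⟨?_, ?_, hmain', ?_⟩
  · intro r
    have hw : dot2 (bv kθ 2) r = -(dot2 (bv kθ 0) r) - dot2 (bv kθ 1) r := by
      simp [dot2, bv]; ring
    have hVt : Vtop kθ V ψ r = 2 * V *
        (Real.cos (dot2 (bv kθ 0) r + ψ) + Real.cos (dot2 (bv kθ 1) r + ψ)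
          + Real.cos (dot2 (bv kθ 0) r + dot2 (bv kθ 1) r - ψ)) := by
      rw [Vtop, Fin.sum_univ_three, hw]
      rw [show -(dot2 (bv kθ 0) r) - dot2 (bv kθ 1) r + ψ
          = -(dot2 (bv kθ 0) r + dot2 (bv kθ 1) r - ψ) by ring, Real.cos_neg]
    rw [hVt]
    have := hmain' (dot2 (bv kθ 0) r) (dot2 (bv kθ 1) r)
    nlinarith [this]
  · have hk : kθ ≠ 0 := ne_of_gt hkθ
    have hs3 : Real.sqrt 3 * Real.sqrt 3 = 3 := Real.mul_self_sqrt (by norm_num)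
    have hs3' : Real.sqrt 3 ≠ 0 := by positivity
    set r := ((1/3 : ℝ) • (av₁ kθ + av₂ kθ)) with hr
    have hr1 : r.1 = 2*Real.pi/(3*kθ) := by
      rw [hr]; simp [av₁, av₂, Prod.smul_def]; ring
    have hr2 : r.2 = 2*Real.pi/(kθ * Real.sqrt 3) := by
      rw [hr]; simp [av₁, av₂, Prod.smul_def]; field_simp; ring
    have e0 : dot2 (bv kθ 0) r = 2*Real.pi/3 := by
      simp [dot2, bv, hr1, hr2]; field_simp
    have e1 : dot2 (bv kθ 1) r = 2*Real.pi/3 := by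
      simp only [dot2, bv, hr1, hr2]
      field_simp
      ring_nf
    have e2 : dot2 (bv kθ 2) r = -(4*Real.pi/3) := by
      simp only [dot2, bv, hr1, hr2]
      field_simp
      ring_nf
    rw [Vtop, Fin.sum_univ_three, e0, e1, e2]
    rw [show -(4*Real.pi/3) + ψ = (ψ + 2*Real.pi/3) - 2*Real.pi by ring,
      Real.cos_sub_two_pi,
      show 2*Real.pi/3 + ψ = ψ + 2*Real.pi/3 by ring]
    ring
  · rw [show 2*Real.pi/3 + 2*Real.pi/3 - ψ = 2*Real.pi - (ψ + 2*Real.pi/3) by ring,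
      Real.cos_two_pi_sub,
      show 2*Real.pi/3 + ψ = ψ + 2*Real.pi/3 by ring]
    ring
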